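/- Let r, z ∈ ℝ^n, set s = r + z, and let w = argmax_i s_i. Suppose z_w = max_i z_i (the winner has the largest boost). Then for the softmax σ of s at temperature τ > 0, the hard-vs-soft gap satisfies r_w − ∑_i σ_i r_i ≤ max_i s_i − ∑_i σ_i s_i, and consequently r_w − ∑_i σ_i r_i ≤ 2τ·log n. -/

import Mathlib

open Real Finset

/-!
Since `s = r + z`, the gap for `r` equals the gap for `s` minus `z w - ∑ σ i * z i`, which is
nonnegative because `z` is largest at `w`. The gap for `s` is `τ ∑ σ i (s w - s i) / τ`, and by
concavity of `log` this is at most `τ log ∑ σ i exp ((s w - s i) / τ) = τ log (n σ w) ≤ τ log n`.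
-/

noncomputable def softmax {ι : Type*} [Fintype ι] (τ : ℝ) (s : ι → ℝ) (i : ι) : ℝ :=
  exp (s i / τ) / ∑ k, exp (s k / τ)

section WeightedMean

variable {ι : Type*} [Fintype ι] {p : ι → ℝ}

theorem sum_mul_le_of_le (hp : ∀ i, 0 ≤ p i) (hp1 : ∑ i, p i = 1) {z : ι → ℝ} {M : ℝ}
    (hz : ∀ i, z i ≤ M) : ∑ i, p i * z i ≤ M :=
  calc ∑ i, p i * z i ≤ ∑ i, p i * M :=
        sum_le_sum fun i _ => mul_le_mul_of_nonneg_left (hz i) (hp i)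
    _ = M := by rw [← sum_mul, hp1, one_mul]

theorem sub_sum_mul_le_sub_sum_mul_add (hp : ∀ i, 0 ≤ p i) (hp1 : ∑ i, p i = 1)
    (r z : ι → ℝ) {w : ι} (hz : ∀ i, z i ≤ z w) :
    r w - ∑ i, p i * r i ≤ r w + z w - ∑ i, p i * (r i + z i) := by
  have hpz := sum_mul_le_of_le hp hp1 hz
  simp only [mul_add, sum_add_distrib]
  linarith

end WeightedMean

namespace softmax

variable {ι : Type*} [Fintype ι] (τ : ℝ) (s : ι → ℝ)

theorem pos [Nonempty ι] (i : ι) : 0 < softmax τ s i :=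
  div_pos (exp_pos _) (sum_pos (fun _ _ => exp_pos _) univ_nonempty)

theorem sum_eq_one [Nonempty ι] : ∑ i, softmax τ s i = 1 := by
  simp only [softmax]
  rw [← sum_div, div_self (sum_pos (fun _ _ => exp_pos _) univ_nonempty).ne']

theorem le_one (i : ι) : softmax τ s i ≤ 1 :=
  div_le_one_of_le₀ (single_le_sum (f := fun k => exp (s k / τ)) (fun _ _ => (exp_pos _).le)
    (mem_univ i)) (sum_nonneg fun _ _ => (exp_pos _).le)

theorem mul_exp_sub (i j : ι) :
    softmax τ s i * exp ((s j - s i) / τ) = softmax τ s j := by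
  rw [softmax, softmax, div_mul_eq_mul_div, ← exp_add, sub_div, add_sub_cancel]

theorem sub_sum_mul_le_log_card {τ : ℝ} (hτ : 0 < τ) (w : ι) :
    s w - ∑ i, softmax τ s i * s i ≤ τ * log (Fintype.card ι) := by
  have : Nonempty ι := ⟨w⟩
  set σ := softmax τ s
  have hσ1 : ∑ i, σ i = 1 := sum_eq_one τ s
  have hgap : s w - ∑ i, σ i * s i = τ * ∑ i, σ i * ((s w - s i) / τ) := by
    calc s w - ∑ i, σ i * s i = ∑ i, σ i * (s w - s i) := by
          rw [sum_congr rfl fun i _ => mul_sub (σ i) (s w) (s i), sum_sub_distrib, ← sum_mul, hσ1,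
            one_mul]
      _ = τ * ∑ i, σ i * ((s w - s i) / τ) := by
          rw [mul_sum]
          exact sum_congr rfl fun i _ => by field_simp
  have hjensen : ∑ i, σ i * ((s w - s i) / τ) ≤ log (Fintype.card ι * σ w) := by
    have := strictConcaveOn_log_Ioi.concaveOn.le_map_sum (t := univ)
      (p := fun i => exp ((s w - s i) / τ)) (fun i _ => (pos τ s i).le) hσ1 (fun _ _ => exp_pos _)
    simpa only [smul_eq_mul, log_exp, mul_exp_sub τ s, sum_const, card_univ, nsmul_eq_mul]
      using this
  have hcard : (0 : ℝ) < Fintype.card ι := by exact_mod_cast Fintype.card_pos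
  calc s w - ∑ i, σ i * s i ≤ τ * log (Fintype.card ι * σ w) := by
        rw [hgap]; exact mul_le_mul_of_nonneg_left hjensen hτ.le
    _ ≤ τ * log (Fintype.card ι) := by
        gcongr
        · exact mul_pos hcard (pos τ s w)
        · exact mul_le_of_le_one_right hcard.le (le_one τ s w)

end softmax

theorem hard_soft_gap_general (n : ℕ) (r z : Fin n → ℝ) (τ : ℝ) (hτ : 0 < τ)
    (w : Fin n)
    (hzw : ∀ i, z i ≤ z w) :
    let s : Fin n → ℝ := fun i => r i + z i
    let σ : Fin n → ℝ := fun i => Real.exp (s i / τ) / ∑ k, Real.exp (s k / τ)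
    (r w - ∑ i, σ i * r i ≤ s w - ∑ i, σ i * s i) ∧
    (r w - ∑ i, σ i * r i ≤ 2 * τ * Real.log n) := by
  intro s σ
  have : Nonempty (Fin n) := ⟨w⟩
  have hboost : r w - ∑ i, σ i * r i ≤ s w - ∑ i, σ i * s i :=
    sub_sum_mul_le_sub_sum_mul_add (fun i => (softmax.pos τ s i).le) (softmax.sum_eq_one τ s) r z
      hzw
  have hsoft : s w - ∑ i, σ i * s i ≤ τ * log n := by
    have h := softmax.sub_sum_mul_le_log_card s hτ w
    rwa [Fintype.card_fin] at h
  have hlog : 0 ≤ log n := log_natCast_nonneg n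
  refine ⟨hboost, hboost.trans (hsoft.trans ?_)⟩
  nlinarith

/-- Hard-vs-soft gap when the winner has the largest boost. -/
theorem hard_soft_gap (n : ℕ) (hn : 1 ≤ n) (r z : Fin n → ℝ) (τ : ℝ) (hτ : 0 < τ)
    (w : Fin n)
    (hw : ∀ i, r i + z i ≤ r w + z w)
    (hzw : ∀ i, z i ≤ z w) :
    let s : Fin n → ℝ := fun i => r i + z i
    let σ : Fin n → ℝ := fun i => Real.exp (s i / τ) / ∑ k, Real.exp (s k / τ)
    (r w - ∑ i, σ i * r i ≤ s w - ∑ i, σ i * s i) ∧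
    (r w - ∑ i, σ i * r i ≤ 2 * τ * Real.log n) :=
  hard_soft_gap_general n r z τ hτ w hzw
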